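/- arXiv:2211.06245 — 2 statements merged into one kernel-verified Lean document; each statement's English description precedes it below -/
import Mathlib

section
/- Let n ≥ 20 with n ≡ 0 (mod 5). The 5-uniform hypergraph H on V = {1,...,n} with hyperedges E = { {i, i+1, i+2, i+3, i+4} : i ∈ {1, 6, 11, ..., n−4} } ∪ { {i, i+1, i+2, i−6, i−5} : i ∈ {4, 9, 14, ..., n−1} } ∪ { {i, i+1, i+2, i+7, i+8} : i ∈ {5, 10, 15, ..., n} } (indices mod n) satisfies EI(H) = C_n and |E| = 3n/5; consequently, the minimum number of hyperedges of a 5-uniform hypergraph whose edge intersection hypergraph is C_n equals 3n/5. -/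
open Finset

/-- Edge intersection hypergraph of a hypergraph with edge set `E` on vertex set `Fin n`. -/
def EIh {n : ℕ} (E : Finset (Finset (Fin n))) : Finset (Finset (Fin n)) :=
  ((E ×ˢ E).filter fun p => p.1 ≠ p.2 ∧ 2 ≤ (p.1 ∩ p.2).card).image fun p => p.1 ∩ p.2

/-- The edge set of the cycle `C_n` on vertex set `Fin n`. -/
def cyc (n : ℕ) [NeZero n] : Finset (Finset (Fin n)) :=
  Finset.univ.image fun i : Fin n => ({i, i + 1} : Finset (Fin n))

/-- Degree of a vertex in a hypergraph. -/
def hdeg {n : ℕ} (E : Finset (Finset (Fin n))) (v : Fin n) : ℕ :=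
  (E.filter fun e => v ∈ e).card


/-
Lower bound: a vertex `v` lies in the cycle edges `{v - 1, v}` and `{v, v + 1}`, each the
intersection of two distinct hyperedges through `v`; the two pairs of hyperedges cannot coincide,
so every vertex has degree at least `3`, and double counting gives `5 |E| ≥ 3 n`.

Construction: each hyperedge is a translate `x + O_t` of one of three offset patterns `O_t`, with
base point `x ≡ r_t (mod 5)`. If two hyperedges meet in a vertex `v`, both are translates of `v`
by patterns contained in `[-8, 8]`; as `n > 16` nothing wraps around, so their intersection is `v`
plus the intersection of the two re-centred patterns. Which re-centred patterns meet depends only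
on residues mod 5, and a finite check shows that they share at most a pair `{c, c + 1}`, and
that every pair `{v, v + 1}` is covered by two different hyperedges.
-/

lemma Nat.card_filter_range_mod_eq {n m r : ℕ} (hm : 0 < m) (hmn : m ∣ n) (hr : r < m) :
    #{i ∈ range n | i % m = r} = n / m := by
  simpa [Nat.count_eq_card_filter_range, Nat.ModEq, Nat.mod_eq_of_lt hr,
    Nat.mod_eq_zero_of_dvd hmn] using Nat.count_modEq_card n hm r

lemma mem_EIh {n : ℕ} {E : Finset (Finset (Fin n))} {s : Finset (Fin n)} :
    s ∈ EIh E ↔ ∃ e₁ ∈ E, ∃ e₂ ∈ E, e₁ ≠ e₂ ∧ 2 ≤ #(e₁ ∩ e₂) ∧ e₁ ∩ e₂ = s := by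
  simp [EIh, and_assoc]

section

open Fin.CommRing

variable {n : ℕ} [NeZero n]

lemma intCast_fin_eq_iff {a b : ℤ} (h : |a - b| < n) : (a : Fin n) = b ↔ a = b := by
  refine ⟨fun hab => ?_, congrArg _⟩
  have hdvd : (n : ℤ) ∣ a - b :=
    (CharP.intCast_eq_zero_iff (Fin n) n _).1 (by push_cast; rw [hab, sub_self])
  linarith [Int.eq_zero_of_abs_lt_dvd hdvd h]

lemma add_intCast_ne_self {c : ℤ} (hc0 : c ≠ 0) (hc : |c| < n) (v : Fin n) : v + c ≠ v := by
  intro h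
  have : ((c : ℤ) : Fin n) = ((0 : ℤ) : Fin n) := by push_cast; linear_combination h
  exact hc0 ((intCast_fin_eq_iff (by simpa using hc)).1 this)

lemma add_one_ne_self (hn : 2 ≤ n) (v : Fin n) : v + 1 ≠ v := by
  simpa using add_intCast_ne_self one_ne_zero (by simp; omega) v

lemma three_le_hdeg (hn : 3 ≤ n) {E : Finset (Finset (Fin n))} (hE : EIh E = cyc n)
    (v : Fin n) : 3 ≤ hdeg E v := by
  have pair_mem (w : Fin n) : {w, w + 1} ∈ EIh E := hE ▸ mem_image_of_mem _ (mem_univ w)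
  obtain ⟨e₁, he₁, e₂, he₂, hne, -, he⟩ := mem_EIh.1 (pair_mem (v - 1))
  obtain ⟨f₁, hf₁, f₂, hf₂, hnf, -, hf⟩ := mem_EIh.1 (pair_mem v)
  rw [sub_add_cancel] at he
  have hv_e : v ∈ e₁ ∩ e₂ := he ▸ by simp
  have hv_f : v ∈ f₁ ∩ f₂ := hf ▸ by simp
  simp only [mem_inter] at hv_e hv_f
  by_contra! hlt
  have hS : E.filter (v ∈ ·) = {e₁, e₂} := by
    refine (eq_of_subset_of_card_le (fun e he => ?_) ?_).symm
    · simp only [mem_insert, mem_singleton] at he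
      rcases he with rfl | rfl <;> simp [*]
    · rw [card_pair hne]; exact Nat.le_of_lt_succ hlt
  have hf₁ : f₁ ∈ ({e₁, e₂} : Finset _) := hS ▸ mem_filter.2 ⟨hf₁, hv_f.1⟩
  have hf₂ : f₂ ∈ ({e₁, e₂} : Finset _) := hS ▸ mem_filter.2 ⟨hf₂, hv_f.2⟩
  have hfe : f₁ ∩ f₂ = e₁ ∩ e₂ := by
    simp only [mem_insert, mem_singleton] at hf₁ hf₂
    rcases hf₁ with rfl | rfl <;> rcases hf₂ with rfl | rfl <;> simp_all [inter_comm]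
  have : v + 1 ∈ ({v - 1, v} : Finset (Fin n)) := by rw [← he, ← hfe, hf]; simp
  simp only [mem_insert, mem_singleton] at this
  rcases this with h | h
  · exact add_intCast_ne_self (c := 2) (by norm_num) (by simp; omega) (v - 1)
      (by push_cast; linear_combination h)
  · exact add_one_ne_self (by omega) v h

lemma three_mul_le_five_mul_card (hn : 3 ≤ n) {E : Finset (Finset (Fin n))}
    (hu : ∀ e ∈ E, #e = 5) (hE : EIh E = cyc n) : 3 * n ≤ 5 * #E :=
  calc 3 * n = Fintype.card (Fin n) * 3 := by rw [Fintype.card_fin, mul_comm]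
    _ ≤ ∑ e ∈ E, #e := le_sum_card (three_le_hdeg hn hE)
    _ = 5 * #E := by rw [sum_const_nat hu, mul_comm]

lemma EIh_eq_cyc_of_subset (hn : 2 ≤ n) {E : Finset (Finset (Fin n))} (hsub : EIh E ⊆ cyc n)
    (hcover : ∀ v : Fin n, ∃ e₁ ∈ E, ∃ e₂ ∈ E, e₁ ≠ e₂ ∧ {v, v + 1} ⊆ e₁ ∩ e₂) :
    EIh E = cyc n := by
  refine hsub.antisymm fun s hs => ?_
  obtain ⟨v, -, rfl⟩ := mem_image.1 hs
  obtain ⟨e₁, he₁, e₂, he₂, hne, hv⟩ := hcover v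
  have hcard : #{v, v + 1} = 2 := card_pair (add_one_ne_self hn v).symm
  have hmem : e₁ ∩ e₂ ∈ EIh E :=
    mem_EIh.2 ⟨e₁, he₁, e₂, he₂, hne, hcard ▸ card_le_card hv, rfl⟩
  obtain ⟨z, -, hz⟩ := mem_image.1 (hsub hmem)
  rwa [eq_of_subset_of_card_le hv (hz ▸ hcard ▸ card_le_two)]

def offsetSet (x : Fin n) (O : Finset ℤ) : Finset (Fin n) := O.image fun c : ℤ => x + c

lemma offsetSet_sub (x : Fin n) (d : ℤ) (O : Finset ℤ) :
    offsetSet (x - (d : Fin n)) O = offsetSet x (O.image (· - d)) := by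
  simp only [offsetSet, image_image, Function.comp_def, Int.cast_sub]
  congr! 2
  ring

lemma injOn_add_intCast {m : ℤ} (hm : 2 * m < n) (x : Fin n) :
    Set.InjOn (fun c : ℤ => x + (c : Fin n)) (Set.Icc (-m) m) := by
  intro a ha b hb hab
  refine (intCast_fin_eq_iff ?_).1 (add_left_cancel hab)
  rw [abs_lt]
  constructor <;> linarith [ha.1, ha.2, hb.1, hb.2]

lemma card_offsetSet {m : ℤ} (hm : 2 * m < n) (x : Fin n) {O : Finset ℤ}
    (hO : O ⊆ Icc (-m) m) : #(offsetSet x O) = #O :=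
  card_image_of_injOn ((injOn_add_intCast hm x).mono (by simpa [← coe_subset] using hO))

lemma offsetSet_inter {m : ℤ} (hm : 2 * m < n) (x : Fin n) {O₁ O₂ : Finset ℤ}
    (h₁ : O₁ ⊆ Icc (-m) m) (h₂ : O₂ ⊆ Icc (-m) m) :
    offsetSet x O₁ ∩ offsetSet x O₂ = offsetSet x (O₁ ∩ O₂) :=
  (image_inter_of_injOn _ _ ((injOn_add_intCast hm x).mono
    (by simpa [← coe_subset, ← coe_union] using union_subset h₁ h₂))).symm

def residueHom {m : ℕ} (hm : m ∣ n) : Fin n →+* ZMod m :=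
  (ZMod.castHom hm (ZMod m)).comp (ZMod.finEquiv n).toRingHom

lemma residueHom_natCast {m : ℕ} (hm : m ∣ n) {i r : ℕ} (hi : i % m = r) :
    residueHom hm (i : Fin n) = r := by
  rw [map_natCast, ← ZMod.natCast_mod, hi]

lemma residueHom_eq_iff {m : ℕ} (hm : m ∣ n) (x : Fin n) {r : ℕ} (hr : r < m) :
    residueHom hm x = r ↔ (x : ℕ) % m = r := by
  rw [← Fin.cast_val_eq_self x, map_natCast, ZMod.natCast_eq_natCast_iff', Nat.mod_eq_of_lt hr,
    Fin.val_natCast, Nat.mod_eq_of_lt x.isLt]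

end

def offsets : Fin 3 → Finset ℤ := ![{0, 1, 2, 3, 4}, {0, 1, 2, -6, -5}, {0, 1, 2, 7, 8}]

def baseResidue : Fin 3 → ℕ := ![1, 4, 0]

lemma baseResidue_lt : ∀ t, baseResidue t < 5 := by decide

lemma offsets_subset_Icc : ∀ t, offsets t ⊆ Icc (-8) 8 := by decide

lemma card_offsets : ∀ t, #(offsets t) = 5 := by decide

lemma image_sub_offsets_subset_Icc :
    ∀ t, ∀ o ∈ offsets t, (offsets t).image (· - o) ⊆ Icc (-8) 8 := by
  decide

lemma offsets_inter_eq_pair : ∀ t₁ t₂ : Fin 3, ∀ o₁ ∈ offsets t₁, ∀ o₂ ∈ offsets t₂,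
    ((baseResidue t₁ + o₁ : ℤ) : ZMod 5) = ((baseResidue t₂ + o₂ : ℤ) : ZMod 5) →
    (t₁ = t₂ → o₁ ≠ o₂) →
    2 ≤ #((offsets t₁).image (· - o₁) ∩ (offsets t₂).image (· - o₂)) →
    ∃ c ∈ Icc (-8 : ℤ) 8,
      (offsets t₁).image (· - o₁) ∩ (offsets t₂).image (· - o₂) = {c, c + 1} := by
  decide

lemma exists_offsets_through_pair : ∀ ρ : ZMod 5, ∃ t₁ t₂ : Fin 3, t₁ ≠ t₂ ∧
    (∃ c ∈ offsets t₁, c + 1 ∈ offsets t₁ ∧ (baseResidue t₁ : ZMod 5) + c = ρ) ∧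
    (∃ c ∈ offsets t₂, c + 1 ∈ offsets t₂ ∧ (baseResidue t₂ : ZMod 5) + c = ρ) := by
  decide

open Fin.NatCast in
def construction (n : ℕ) [NeZero n] : Finset (Finset (Fin n)) :=
  (((Finset.range n).filter fun i => i % 5 = 1).image fun i : ℕ =>
    ({(i : Fin n), ((i + 1 : ℕ) : Fin n), ((i + 2 : ℕ) : Fin n),
      ((i + 3 : ℕ) : Fin n), ((i + 4 : ℕ) : Fin n)} : Finset (Fin n))) ∪
  (((Finset.range n).filter fun i => i % 5 = 4).image fun i : ℕ =>
    ({(i : Fin n), ((i + 1 : ℕ) : Fin n), ((i + 2 : ℕ) : Fin n),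
      ((i : Fin n) - 6), ((i : Fin n) - 5)} : Finset (Fin n))) ∪
  (((Finset.range n).filter fun i => i % 5 = 0).image fun i : ℕ =>
    ({(i : Fin n), ((i + 1 : ℕ) : Fin n), ((i + 2 : ℕ) : Fin n),
      ((i + 7 : ℕ) : Fin n), ((i + 8 : ℕ) : Fin n)} : Finset (Fin n)))

section

open Fin.CommRing

variable {n : ℕ} [NeZero n]

def edge (t : Fin 3) (x : Fin n) : Finset (Fin n) := offsetSet x (offsets t)

def family (n : ℕ) [NeZero n] (t : Fin 3) : Finset (Finset (Fin n)) :=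
  {i ∈ range n | i % 5 = baseResidue t}.image fun i : ℕ => edge t (i : Fin n)

lemma construction_eq_union_family :
    construction n = family n 0 ∪ family n 1 ∪ family n 2 := by
  simp [construction, family, baseResidue, edge, offsetSet, offsets, sub_eq_add_neg]
  -- the two sides now differ only in the instances behind casts and numerals in `Fin n`
  rfl

lemma card_edge (hn : 16 < n) (t : Fin 3) (x : Fin n) : #(edge t x) = 5 := by
  rw [edge, card_offsetSet (m := 8) (by omega) x (offsets_subset_Icc t), card_offsets]

lemma pair_subset_edge {t : Fin 3} {c : ℤ} (hc : c ∈ offsets t) (hc' : c + 1 ∈ offsets t)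
    (v : Fin n) : {v, v + 1} ⊆ edge t (v - c) := by
  intro w hw
  simp only [mem_insert, mem_singleton] at hw
  rcases hw with rfl | rfl
  · exact mem_image.2 ⟨c, hc, sub_add_cancel _ _⟩
  · exact mem_image.2 ⟨c + 1, hc', by push_cast; ring⟩

lemma edge_inter_edge_eq_pair (hn : 16 < n) (h5 : 5 ∣ n) {t₁ t₂ : Fin 3} {x y : Fin n}
    (hx : residueHom h5 x = baseResidue t₁) (hy : residueHom h5 y = baseResidue t₂)
    (hne : t₁ = t₂ → x ≠ y) (h2 : 2 ≤ #(edge t₁ x ∩ edge t₂ y)) :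
    ∃ z, edge t₁ x ∩ edge t₂ y = {z, z + 1} := by
  obtain ⟨v, hv⟩ := card_pos.1 (by omega : 0 < #(edge t₁ x ∩ edge t₂ y))
  obtain ⟨o₁, ho₁, hxv⟩ := mem_image.1 (mem_inter.1 hv).1
  obtain ⟨o₂, ho₂, hyv⟩ := mem_image.1 (mem_inter.1 hv).2
  have hx' : x = v - (o₁ : Fin n) := eq_sub_of_add_eq hxv
  have hy' : y = v - (o₂ : Fin n) := eq_sub_of_add_eq hyv
  have hinter : edge t₁ x ∩ edge t₂ y =
      offsetSet v ((offsets t₁).image (· - o₁) ∩ (offsets t₂).image (· - o₂)) := by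
    rw [edge, edge, hx', hy', offsetSet_sub, offsetSet_sub, offsetSet_inter (m := 8) (by omega) v
      (image_sub_offsets_subset_Icc t₁ o₁ ho₁) (image_sub_offsets_subset_Icc t₂ o₂ ho₂)]
  have hres : ((baseResidue t₁ + o₁ : ℤ) : ZMod 5) = ((baseResidue t₂ + o₂ : ℤ) : ZMod 5) := by
    have h₁ := congrArg (residueHom h5) hxv
    have h₂ := congrArg (residueHom h5) hyv
    rw [map_add, map_intCast, hx] at h₁
    rw [map_add, map_intCast, hy] at h₂
    push_cast
    rw [h₁, h₂]
  obtain ⟨c, -, hc⟩ := offsets_inter_eq_pair t₁ t₂ o₁ ho₁ o₂ ho₂ hres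
    (fun ht ho => hne ht (by rw [hx', hy', ho])) (h2.trans (hinter ▸ card_image_le))
  refine ⟨v + c, ?_⟩
  rw [hinter, hc, offsetSet, image_insert, image_singleton]
  push_cast
  rw [add_assoc]

lemma eq_of_edge_eq (hn : 16 < n) (h5 : 5 ∣ n) {t₁ t₂ : Fin 3} {x y : Fin n}
    (hx : residueHom h5 x = baseResidue t₁) (hy : residueHom h5 y = baseResidue t₂)
    (h : edge t₁ x = edge t₂ y) : t₁ = t₂ ∧ x = y := by
  by_contra hne
  obtain ⟨z, hz⟩ := edge_inter_edge_eq_pair hn h5 hx hy (fun ht hxy => hne ⟨ht, hxy⟩)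
    (by rw [h, inter_self, card_edge hn]; omega)
  rw [h, inter_self] at hz
  have h5' := card_edge hn t₂ y
  rw [hz] at h5'
  have := card_le_two (a := z) (b := z + 1)
  omega

lemma mem_family (h5 : 5 ∣ n) {t : Fin 3} {e : Finset (Fin n)} :
    e ∈ family n t ↔ ∃ x, residueHom h5 x = baseResidue t ∧ edge t x = e := by
  simp only [family, mem_image, mem_filter, mem_range]
  constructor
  · rintro ⟨i, ⟨-, hi⟩, rfl⟩
    exact ⟨i, residueHom_natCast h5 hi, rfl⟩
  · rintro ⟨x, hx, rfl⟩
    exact ⟨x, ⟨x.isLt, (residueHom_eq_iff h5 x (baseResidue_lt t)).1 hx⟩,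
      by rw [Fin.cast_val_eq_self]⟩

lemma mem_construction (h5 : 5 ∣ n) {e : Finset (Fin n)} :
    e ∈ construction n ↔ ∃ t x, residueHom h5 x = baseResidue t ∧ edge t x = e := by
  simp only [construction_eq_union_family, mem_union, mem_family h5, Fin.exists_fin_succ,
    IsEmpty.exists_iff, or_false, or_assoc]
  rfl

lemma card_of_mem_construction (hn : 16 < n) (h5 : 5 ∣ n) {e : Finset (Fin n)}
    (he : e ∈ construction n) : #e = 5 := by
  obtain ⟨t, x, -, rfl⟩ := (mem_construction h5).1 he
  exact card_edge hn t x

lemma EIh_construction_subset (hn : 16 < n) (h5 : 5 ∣ n) : EIh (construction n) ⊆ cyc n := by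
  intro s hs
  obtain ⟨e₁, he₁, e₂, he₂, hne, h2, rfl⟩ := mem_EIh.1 hs
  obtain ⟨t₁, x, hx, rfl⟩ := (mem_construction h5).1 he₁
  obtain ⟨t₂, y, hy, rfl⟩ := (mem_construction h5).1 he₂
  obtain ⟨z, hz⟩ := edge_inter_edge_eq_pair hn h5 hx hy (by rintro rfl rfl; exact hne rfl) h2
  exact hz ▸ mem_image_of_mem _ (mem_univ z)

lemma exists_edges_inter_superset_pair (hn : 16 < n) (h5 : 5 ∣ n) (v : Fin n) :
    ∃ e₁ ∈ construction n, ∃ e₂ ∈ construction n, e₁ ≠ e₂ ∧ {v, v + 1} ⊆ e₁ ∩ e₂ := by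
  obtain ⟨t₁, t₂, ht, ⟨c₁, hc₁, hc₁', hρ₁⟩, ⟨c₂, hc₂, hc₂', hρ₂⟩⟩ :=
    exists_offsets_through_pair (residueHom h5 v)
  have residue_sub {t : Fin 3} {c : ℤ} (hρ : (baseResidue t : ZMod 5) + c = residueHom h5 v) :
      residueHom h5 (v - c) = baseResidue t := by
    rw [map_sub, map_intCast, ← hρ, add_sub_cancel_right]
  refine ⟨edge t₁ (v - c₁), (mem_construction h5).2 ⟨t₁, _, residue_sub hρ₁, rfl⟩,
    edge t₂ (v - c₂), (mem_construction h5).2 ⟨t₂, _, residue_sub hρ₂, rfl⟩,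
    fun h => ht (eq_of_edge_eq hn h5 (residue_sub hρ₁) (residue_sub hρ₂) h).1,
    subset_inter (pair_subset_edge hc₁ hc₁' v) (pair_subset_edge hc₂ hc₂' v)⟩

lemma EIh_construction (hn : 16 < n) (h5 : 5 ∣ n) : EIh (construction n) = cyc n :=
  EIh_eq_cyc_of_subset (by omega) (EIh_construction_subset hn h5)
    (exists_edges_inter_superset_pair hn h5)

lemma card_family (hn : 16 < n) (h5 : 5 ∣ n) (t : Fin 3) : #(family n t) = n / 5 := by
  rw [family, card_image_of_injOn,
    Nat.card_filter_range_mod_eq (by norm_num) h5 (baseResidue_lt t)]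
  intro i hi j hj hij
  simp only [coe_filter, mem_range, Set.mem_ofPred_eq] at hi hj
  have := congrArg Fin.val
    (eq_of_edge_eq hn h5 (residueHom_natCast h5 hi.2) (residueHom_natCast h5 hj.2) hij).2
  rwa [Fin.val_cast_of_lt hi.1, Fin.val_cast_of_lt hj.1] at this

lemma disjoint_family (hn : 16 < n) (h5 : 5 ∣ n) {t₁ t₂ : Fin 3} (ht : t₁ ≠ t₂) :
    Disjoint (family n t₁) (family n t₂) := by
  refine disjoint_left.2 fun e he₁ he₂ => ?_
  obtain ⟨x, hx, rfl⟩ := (mem_family h5).1 he₁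
  obtain ⟨y, hy, hxy⟩ := (mem_family h5).1 he₂
  exact ht (eq_of_edge_eq hn h5 hx hy hxy.symm).1

lemma five_mul_card_construction (hn : 16 < n) (h5 : 5 ∣ n) :
    5 * #(construction n) = 3 * n := by
  suffices #(construction n) = 3 * (n / 5) by omega
  rw [construction_eq_union_family, card_union_of_disjoint, card_union_of_disjoint,
    card_family hn h5, card_family hn h5, card_family hn h5]
  · ring
  · exact disjoint_family hn h5 (by decide)
  · exact disjoint_union_left.2
      ⟨disjoint_family hn h5 (by decide), disjoint_family hn h5 (by decide)⟩

end

open Fin.NatCast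

theorem stmt_15 (n : ℕ) [NeZero n] (hn : 20 ≤ n) (hmod : n % 5 = 0) :
    letI E : Finset (Finset (Fin n)) :=
      (((Finset.range n).filter fun i => i % 5 = 1).image fun i : ℕ =>
        ({(i : Fin n), ((i + 1 : ℕ) : Fin n), ((i + 2 : ℕ) : Fin n),
          ((i + 3 : ℕ) : Fin n), ((i + 4 : ℕ) : Fin n)} : Finset (Fin n))) ∪
      (((Finset.range n).filter fun i => i % 5 = 4).image fun i : ℕ =>
        ({(i : Fin n), ((i + 1 : ℕ) : Fin n), ((i + 2 : ℕ) : Fin n),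
          ((i : Fin n) - 6), ((i : Fin n) - 5)} : Finset (Fin n))) ∪
      (((Finset.range n).filter fun i => i % 5 = 0).image fun i : ℕ =>
        ({(i : Fin n), ((i + 1 : ℕ) : Fin n), ((i + 2 : ℕ) : Fin n),
          ((i + 7 : ℕ) : Fin n), ((i + 8 : ℕ) : Fin n)} : Finset (Fin n)))
    EIh E = cyc n ∧ 5 * E.card = 3 * n ∧
      IsLeast {m : ℕ | ∃ E' : Finset (Finset (Fin n)),
        (∀ e ∈ E', e.card = 5) ∧ EIh E' = cyc n ∧ E'.card = m} (3 * n / 5) := by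
  have h5 : 5 ∣ n := Nat.dvd_of_mod_eq_zero hmod
  have hn' : 16 < n := by omega
  have hcard := five_mul_card_construction hn' h5
  refine ⟨EIh_construction hn' h5, hcard, ⟨construction n,
    fun _ => card_of_mem_construction hn' h5, EIh_construction hn' h5, by omega⟩, ?_⟩
  rintro m ⟨E, hu, hE, rfl⟩
  have := three_mul_le_five_mul_card (by omega) hu hE
  omega
end

section
/- Let n ≥ 24 be even and let H = (V, E) be a 6-uniform, 3-regular hypergraph with EI(H) = C_n. Then |E| = n/2, and this is minimum: every 6-uniform hypergraph H' with EI(H') = C_n satisfies |E(H')| ≥ n/2. -/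
open Finset

/-! Counting vertex–hyperedge incidences gives `Σ_v deg v = 6|E|`, so 3-regularity forces
`6|E| = 3n`. For the lower bound every vertex `v` has degree at least 3: the cycle edges
`{v-1, v}` and `{v, v+1}` are both intersections of two hyperedges through `v`, and with at most
two hyperedges through `v` these intersections would coincide. -/

lemma sum_hdeg_eq_sum_card {n : ℕ} (E : Finset (Finset (Fin n))) :
    ∑ v, hdeg E v = ∑ e ∈ E, e.card := by
  simp only [hdeg, card_filter]
  rw [sum_comm]
  refine sum_congr rfl fun e _ => ?_
  rw [← card_filter, filter_univ_mem]

lemma sum_hdeg_of_uniform {n k : ℕ} {E : Finset (Finset (Fin n))}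
    (hunif : ∀ e ∈ E, e.card = k) : ∑ v, hdeg E v = E.card * k := by
  rw [sum_hdeg_eq_sum_card, sum_congr rfl hunif, sum_const, smul_eq_mul]

lemma exists_inter_eq_of_mem_EIh {n : ℕ} {E : Finset (Finset (Fin n))} {s : Finset (Fin n)}
    (hs : s ∈ EIh E) : ∃ e₁ ∈ E, ∃ e₂ ∈ E, e₁ ≠ e₂ ∧ e₁ ∩ e₂ = s := by
  obtain ⟨⟨e₁, e₂⟩, hp, rfl⟩ := mem_image.1 hs
  obtain ⟨⟨he₁, he₂⟩, hne, -⟩ := by simpa only [mem_filter, mem_product] using hp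
  exact ⟨e₁, he₁, e₂, he₂, hne, rfl⟩

lemma inter_eq_inter_of_hdeg_le_two {n : ℕ} {E : Finset (Finset (Fin n))} {v : Fin n}
    (hv : hdeg E v ≤ 2) {e₁ e₂ f₁ f₂ : Finset (Fin n)}
    (he₁ : e₁ ∈ E) (he₂ : e₂ ∈ E) (hf₁ : f₁ ∈ E) (hf₂ : f₂ ∈ E)
    (hve₁ : v ∈ e₁) (hve₂ : v ∈ e₂) (hvf₁ : v ∈ f₁) (hvf₂ : v ∈ f₂)
    (he : e₁ ≠ e₂) (hf : f₁ ≠ f₂) : f₁ ∩ f₂ = e₁ ∩ e₂ := by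
  have hsub : {e₁, e₂} ⊆ E.filter (v ∈ ·) := by
    intro x hx
    rcases mem_insert.1 hx with rfl | hx
    · exact mem_filter.2 ⟨he₁, hve₁⟩
    · exact mem_singleton.1 hx ▸ mem_filter.2 ⟨he₂, hve₂⟩
  have hpair : E.filter (v ∈ ·) = {e₁, e₂} :=
    (eq_of_subset_of_card_le hsub (by rw [card_pair he]; exact hv)).symm
  have hf₁' : f₁ ∈ ({e₁, e₂} : Finset _) := hpair ▸ mem_filter.2 ⟨hf₁, hvf₁⟩
  have hf₂' : f₂ ∈ ({e₁, e₂} : Finset _) := hpair ▸ mem_filter.2 ⟨hf₂, hvf₂⟩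
  simp only [mem_insert, mem_singleton] at hf₁' hf₂'
  rcases hf₁' with rfl | rfl <;> rcases hf₂' with rfl | rfl
  all_goals first | exact absurd rfl hf | rfl | exact inter_comm _ _

open Fin.NatCast in
lemma pair_sub_one_ne_pair_add_one {n : ℕ} [NeZero n] (hn : 3 ≤ n) (v : Fin n) :
    ({v - 1, v} : Finset (Fin n)) ≠ {v, v + 1} := by
  have hcast : ∀ k : ℕ, 0 < k → k < n → (k : Fin n) ≠ 0 := fun k hk hkn h =>
    absurd (Nat.le_of_dvd hk (Fin.natCast_eq_zero.1 h)) (by omega)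
  intro h
  have hmem : v - 1 ∈ ({v, v + 1} : Finset (Fin n)) := h ▸ by simp
  rcases mem_insert.1 hmem with h1 | h1
  · refine hcast 1 one_pos (by omega) ?_
    rw [Nat.cast_one]
    have h2 := congrArg (· + 1) h1
    simp only [sub_add_cancel] at h2
    exact (left_eq_add).1 h2
  · refine hcast 2 two_pos (by omega) ?_
    rw [Nat.cast_ofNat, ← one_add_one_eq_two]
    have h2 := congrArg (· + 1) (mem_singleton.1 h1)
    simp only [sub_add_cancel, add_assoc] at h2
    exact (left_eq_add).1 h2

lemma three_le_hdeg_of_EIh_eq_cyc {n : ℕ} [NeZero n] (hn : 3 ≤ n) {E : Finset (Finset (Fin n))}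
    (hEI : EIh E = cyc n) (v : Fin n) : 3 ≤ hdeg E v := by
  by_contra! hv
  have hcyc : ∀ i : Fin n, ({i, i + 1} : Finset (Fin n)) ∈ EIh E := fun i =>
    hEI ▸ mem_image.2 ⟨i, mem_univ i, rfl⟩
  obtain ⟨e₁, he₁, e₂, he₂, he, hint⟩ := exists_inter_eq_of_mem_EIh (hcyc v)
  obtain ⟨f₁, hf₁, f₂, hf₂, hf, hintf⟩ := exists_inter_eq_of_mem_EIh (hcyc (v - 1))
  rw [sub_add_cancel] at hintf
  have hve : v ∈ e₁ ∩ e₂ := hint ▸ by simp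
  have hvf : v ∈ f₁ ∩ f₂ := hintf ▸ by simp
  rw [mem_inter] at hve hvf
  refine pair_sub_one_ne_pair_add_one hn v ?_
  rw [← hint, ← hintf]
  exact inter_eq_inter_of_hdeg_le_two (Nat.lt_succ_iff.1 hv) he₁ he₂ hf₁ hf₂
    hve.1 hve.2 hvf.1 hvf.2 he hf

theorem stmt_19_general (n : ℕ) [NeZero n] (hn : 24 ≤ n)
    (E : Finset (Finset (Fin n))) (hunif : ∀ e ∈ E, e.card = 6)
    (hreg : ∀ v : Fin n, hdeg E v = 3) :
    2 * E.card = n ∧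
      (∀ E' : Finset (Finset (Fin n)), (∀ e ∈ E', e.card = 6) → EIh E' = cyc n →
        n / 2 ≤ E'.card) := by
  refine ⟨?_, fun E' hunif' hEI' => ?_⟩
  · have h := sum_hdeg_of_uniform hunif
    simp only [hreg, sum_const, card_univ, Fintype.card_fin, smul_eq_mul] at h
    omega
  · have h : ∑ _v : Fin n, 3 ≤ ∑ v, hdeg E' v :=
      sum_le_sum fun v _ => three_le_hdeg_of_EIh_eq_cyc (by omega) hEI' v
    simp only [sum_hdeg_of_uniform hunif', sum_const, card_univ, Fintype.card_fin,
      smul_eq_mul] at h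
    omega

theorem stmt_19 (n : ℕ) [NeZero n] (hn : 24 ≤ n) (heven : n % 2 = 0)
    (E : Finset (Finset (Fin n))) (hunif : ∀ e ∈ E, e.card = 6)
    (hreg : ∀ v : Fin n, hdeg E v = 3) (hEI : EIh E = cyc n) :
    2 * E.card = n ∧
      (∀ E' : Finset (Finset (Fin n)), (∀ e ∈ E', e.card = 6) → EIh E' = cyc n →
        n / 2 ≤ E'.card) :=
  stmt_19_general n hn E hunif hreg
end
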